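/- Lemma 3 (acyclicity): let f : A ⊢ B be an arrow term of DS, and for i ∈ {1,2} let x_i in A and y_i in B be occurrences of the letter p_i that are linked in f. Then it is impossible that A has a subformula occurrence x₁ ∨ x₂ or x₂ ∨ x₁ and B has a subformula occurrence y₁ ∧ y₂ or y₂ ∧ y₁. -/

import Mathlib

/-! ### The category Br of Brauerian split equivalences of finite ordinals

An arrow `m ⊢ n` of `Br` is represented as a relation on `ℕ ⊕ ℕ`, where
`Sum.inl i` (with `i < m`) is the source copy `i_s` and `Sum.inr j`
(with `j < n`) is the target copy `j_t`. -/

abbrev GRel : Type := (ℕ ⊕ ℕ) → (ℕ ⊕ ℕ) → Prop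

/-- The identity arrow of `Br` on `n`: transversals `{i_s, i_t}` for `i < n`. -/
def gId (n : ℕ) : GRel := fun u v =>
  ∃ i, i < n ∧ (u = Sum.inl i ∨ u = Sum.inr i) ∧ (v = Sum.inl i ∨ v = Sum.inr i)

/-- The Brauerian split equivalence whose transversals are `{i_s, (φ i)_t}` for `i < m`. -/
def gFun (m : ℕ) (φ : ℕ → ℕ) : GRel := fun u v =>
  ∃ i, i < m ∧ (u = Sum.inl i ∨ u = Sum.inr (φ i)) ∧ (v = Sum.inl i ∨ v = Sum.inr (φ i))

/-- The block transposition exchanging the first `a` and the last `b` elements. -/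
def gSwap (a b : ℕ) : GRel :=
  gFun (a + b) (fun i => if i < a then i + b else i - a)

/-- `G Δ̂∧_{B,A}` with `a = GA`, `b = GB`: identity transversals on the stem `A`
together with caps joining the two copies of each letter occurrence of `B` in
the crown `¬B ∨ B` of the target. -/
def gDelta (a b : ℕ) : GRel := fun u v =>
  (∃ i, i < a ∧ (u = Sum.inl i ∨ u = Sum.inr i) ∧ (v = Sum.inl i ∨ v = Sum.inr i)) ∨
  (∃ j, j < b ∧ (u = Sum.inr (a + j) ∨ u = Sum.inr (a + b + j)) ∧
                (v = Sum.inr (a + j) ∨ v = Sum.inr (a + b + j)))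

/-- `G Σ̂∨_{B,A}` with `a = GA`, `b = GB`: identity transversals on the stem `A`
together with cups joining the two copies of each letter occurrence of `B` in
the crown `B ∧ ¬B` of the source. -/
def gSigma (a b : ℕ) : GRel := fun u v =>
  (∃ i, i < a ∧ (u = Sum.inl (2*b + i) ∨ u = Sum.inr i) ∧
                (v = Sum.inl (2*b + i) ∨ v = Sum.inr i)) ∨
  (∃ j, j < b ∧ (u = Sum.inl j ∨ u = Sum.inl (b + j)) ∧
                (v = Sum.inl j ∨ v = Sum.inl (b + j)))

/-- Composition `P ∗ R` in `Br`: glue along the middle copy and take the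
transitive closure, restricted to the outer copies. -/
def gComp (Pr R : GRel) : GRel := fun u v =>
  Relation.TransGen
    (fun x y : ℕ ⊕ ℕ ⊕ ℕ =>
      (∃ x' y', Sum.map id Sum.inl x' = x ∧ Sum.map id Sum.inl y' = y ∧ R x' y') ∨
      (∃ x' y', Sum.inr x' = x ∧ Sum.inr y' = y ∧ Pr x' y'))
    (Sum.map id Sum.inr u) (Sum.map id Sum.inr v)

/-- Shift a split relation by `a` on the source side and by `d` on the target side. -/
def gShift (a d : ℕ) (R : GRel) : GRel := fun u v =>
  ∃ u' v', R u' v' ∧ u = Sum.map (· + a) (· + d) u' ∧ v = Sum.map (· + a) (· + d) v'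

/-- Disjoint union of split relations: `G(f ξ g) = Gf ∪ Gg_{+GD}^{+GA}`. -/
def gPar (a d : ℕ) (R S : GRel) : GRel := fun u v => R u v ∨ gShift a d S u v
/-! ### The language L∧,∨ generated from the set `P` of letters -/

inductive Form (P : Type) : Type
  | letter : P → Form P
  | conj : Form P → Form P → Form P
  | disj : Form P → Form P → Form P

infixr:70 " ⋏ " => Form.conj
infixr:66 " ⋎ " => Form.disj

/-- The number of occurrences of letters in a formula (the object map of `G`). -/
def Form.size {P : Type} : Form P → ℕ
  | .letter _ => 1
  | .conj A B => A.size + B.size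
  | .disj A B => A.size + B.size
/-! ### Arrow terms of the free symmetric net category DS -/

inductive Term (P : Type) : Form P → Form P → Type
  | id (A : Form P) : Term P A A
  | comp {A B C : Form P} : Term P B C → Term P A B → Term P A C
  | conj {A B D E : Form P} : Term P A D → Term P B E → Term P (A ⋏ B) (D ⋏ E)
  | disj {A B D E : Form P} : Term P A D → Term P B E → Term P (A ⋎ B) (D ⋎ E)
  | bConjTo (A B C : Form P) : Term P (A ⋏ (B ⋏ C)) ((A ⋏ B) ⋏ C)
  | bConjFrom (A B C : Form P) : Term P ((A ⋏ B) ⋏ C) (A ⋏ (B ⋏ C))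
  | bDisjTo (A B C : Form P) : Term P (A ⋎ (B ⋎ C)) ((A ⋎ B) ⋎ C)
  | bDisjFrom (A B C : Form P) : Term P ((A ⋎ B) ⋎ C) (A ⋎ (B ⋎ C))
  | cConj (A B : Form P) : Term P (A ⋏ B) (B ⋏ A)
  | cDisj (A B : Form P) : Term P (B ⋎ A) (A ⋎ B)
  | d (A B C : Form P) : Term P (A ⋏ (B ⋎ C)) ((A ⋏ B) ⋎ C)

infixr:80 " ⬝ " => Term.comp
infixr:70 " ⊼ " => Term.conj
infixr:66 " ⊽ " => Term.disj

/-- The arrow `d^R_{C,B,A} : (C∨B)∧A ⊢ C∨(B∧A)`. -/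
def dR {P : Type} (C B A : Form P) : Term P ((C ⋎ B) ⋏ A) (C ⋎ (B ⋏ A)) :=
  Term.cDisj C (B ⋏ A) ⬝ ((Term.cConj A B ⊽ Term.id C) ⬝
    (Term.d A B C ⬝ ((Term.id A ⊼ Term.cDisj B C) ⬝ Term.cConj (C ⋎ B) A)))
/-! ### The equations of DS, imposed on arrow terms -/

inductive Eqv {P : Type} : ∀ {A B : Form P}, Term P A B → Term P A B → Prop
  -- equivalence and congruence
  | refl {A B : Form P} (f : Term P A B) : Eqv f f
  | symm {A B : Form P} {f g : Term P A B} : Eqv f g → Eqv g f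
  | trans {A B : Form P} {f g h : Term P A B} : Eqv f g → Eqv g h → Eqv f h
  | congComp {A B C : Form P} {g g' : Term P B C} {f f' : Term P A B} :
      Eqv g g' → Eqv f f' → Eqv (g ⬝ f) (g' ⬝ f')
  | congConj {A B D E : Form P} {f f' : Term P A D} {g g' : Term P B E} :
      Eqv f f' → Eqv g g' → Eqv (f ⊼ g) (f' ⊼ g')
  | congDisj {A B D E : Form P} {f f' : Term P A D} {g g' : Term P B E} :
      Eqv f f' → Eqv g g' → Eqv (f ⊽ g) (f' ⊽ g')
  -- (cat 1), (cat 2)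
  | catIdR {A B : Form P} (f : Term P A B) : Eqv (f ⬝ Term.id A) f
  | catIdL {A B : Form P} (f : Term P A B) : Eqv (Term.id B ⬝ f) f
  | catAssoc {A B C D : Form P} (f : Term P A B) (g : Term P B C) (h : Term P C D) :
      Eqv (h ⬝ (g ⬝ f)) ((h ⬝ g) ⬝ f)
  -- bifunctorial equations (ξ 1), (ξ 2)
  | conjOne (A B : Form P) : Eqv (Term.id A ⊼ Term.id B) (Term.id (A ⋏ B))
  | disjOne (A B : Form P) : Eqv (Term.id A ⊽ Term.id B) (Term.id (A ⋎ B))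
  | conjTwo {A₁ B₁ C₁ A₂ B₂ C₂ : Form P} (g₁ : Term P B₁ C₁) (f₁ : Term P A₁ B₁)
      (g₂ : Term P B₂ C₂) (f₂ : Term P A₂ B₂) :
      Eqv ((g₁ ⬝ f₁) ⊼ (g₂ ⬝ f₂)) ((g₁ ⊼ g₂) ⬝ (f₁ ⊼ f₂))
  | disjTwo {A₁ B₁ C₁ A₂ B₂ C₂ : Form P} (g₁ : Term P B₁ C₁) (f₁ : Term P A₁ B₁)
      (g₂ : Term P B₂ C₂) (f₂ : Term P A₂ B₂) :
      Eqv ((g₁ ⬝ f₁) ⊽ (g₂ ⬝ f₂)) ((g₁ ⊽ g₂) ⬝ (f₁ ⊽ f₂))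
  -- naturality equations
  | bConjNat {A B C D E F : Form P} (f : Term P A D) (g : Term P B E) (h : Term P C F) :
      Eqv (((f ⊼ g) ⊼ h) ⬝ Term.bConjTo A B C) (Term.bConjTo D E F ⬝ (f ⊼ (g ⊼ h)))
  | bDisjNat {A B C D E F : Form P} (f : Term P A D) (g : Term P B E) (h : Term P C F) :
      Eqv (((f ⊽ g) ⊽ h) ⬝ Term.bDisjTo A B C) (Term.bDisjTo D E F ⬝ (f ⊽ (g ⊽ h)))
  | cConjNat {A B D E : Form P} (f : Term P A D) (g : Term P B E) :
      Eqv ((g ⊼ f) ⬝ Term.cConj A B) (Term.cConj D E ⬝ (f ⊼ g))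
  | cDisjNat {A B D E : Form P} (f : Term P A D) (g : Term P B E) :
      Eqv ((g ⊽ f) ⬝ Term.cDisj B A) (Term.cDisj E D ⬝ (f ⊽ g))
  | dNat {A B C D E F : Form P} (f : Term P A D) (g : Term P B E) (h : Term P C F) :
      Eqv (((f ⊼ g) ⊽ h) ⬝ Term.d A B C) (Term.d D E F ⬝ (f ⊼ (g ⊽ h)))
  -- (b̂ξ b̂ξ)
  | bConjIso₁ (A B C : Form P) :
      Eqv (Term.bConjFrom A B C ⬝ Term.bConjTo A B C) (Term.id (A ⋏ (B ⋏ C)))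
  | bConjIso₂ (A B C : Form P) :
      Eqv (Term.bConjTo A B C ⬝ Term.bConjFrom A B C) (Term.id ((A ⋏ B) ⋏ C))
  | bDisjIso₁ (A B C : Form P) :
      Eqv (Term.bDisjFrom A B C ⬝ Term.bDisjTo A B C) (Term.id (A ⋎ (B ⋎ C)))
  | bDisjIso₂ (A B C : Form P) :
      Eqv (Term.bDisjTo A B C ⬝ Term.bDisjFrom A B C) (Term.id ((A ⋎ B) ⋎ C))
  -- (b̂ξ 5)
  | bConjPent (A B C D : Form P) :
      Eqv (Term.bConjFrom A B (C ⋏ D) ⬝ Term.bConjFrom (A ⋏ B) C D)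
        ((Term.id A ⊼ Term.bConjFrom B C D) ⬝
          (Term.bConjFrom A (B ⋏ C) D ⬝ (Term.bConjFrom A B C ⊼ Term.id D)))
  | bDisjPent (A B C D : Form P) :
      Eqv (Term.bDisjFrom A B (C ⋎ D) ⬝ Term.bDisjFrom (A ⋎ B) C D)
        ((Term.id A ⊽ Term.bDisjFrom B C D) ⬝
          (Term.bDisjFrom A (B ⋎ C) D ⬝ (Term.bDisjFrom A B C ⊽ Term.id D)))
  -- (ĉ∧ ĉ∧), (ĉ∨ ĉ∨)
  | cConjIso (A B : Form P) : Eqv (Term.cConj B A ⬝ Term.cConj A B) (Term.id (A ⋏ B))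
  | cDisjIso (A B : Form P) : Eqv (Term.cDisj A B ⬝ Term.cDisj B A) (Term.id (A ⋎ B))
  -- (b̂∧ ĉ∧), (b̂∨ ĉ∨)
  | bcConj (A B C : Form P) :
      Eqv ((Term.id B ⊼ Term.cConj C A) ⬝ (Term.bConjFrom B C A ⬝
            (Term.cConj A (B ⋏ C) ⬝ (Term.bConjFrom A B C ⬝ (Term.cConj B A ⊼ Term.id C)))))
        (Term.bConjFrom B A C)
  | bcDisj (A B C : Form P) :
      Eqv ((Term.id B ⊽ Term.cDisj A C) ⬝ (Term.bDisjFrom B C A ⬝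
            (Term.cDisj (B ⋎ C) A ⬝ (Term.bDisjFrom A B C ⬝ (Term.cDisj A B ⊽ Term.id C)))))
        (Term.bDisjFrom B A C)
  -- (d ∧), (d ∨)
  | dConj (A B C D : Form P) :
      Eqv ((Term.bConjFrom A B C ⊽ Term.id D) ⬝ Term.d (A ⋏ B) C D)
        (Term.d A (B ⋏ C) D ⬝ ((Term.id A ⊼ Term.d B C D) ⬝ Term.bConjFrom A B (C ⋎ D)))
  | dDisj (D C B A : Form P) :
      Eqv (Term.d D C (B ⋎ A) ⬝ (Term.id D ⊼ Term.bDisjFrom C B A))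
        (Term.bDisjFrom (D ⋏ C) B A ⬝ ((Term.d D C B ⊽ Term.id A) ⬝ Term.d D (C ⋎ B) A))
  -- (d b̂∧), (d b̂∨)
  | dBConj (A B C D : Form P) :
      Eqv (dR (A ⋏ B) C D ⬝ (Term.d A B C ⊼ Term.id D))
        (Term.d A B (C ⋏ D) ⬝ ((Term.id A ⊼ dR B C D) ⬝ Term.bConjFrom A (B ⋎ C) D))
  | dBDisj (D C B A : Form P) :
      Eqv ((Term.id D ⊽ Term.d C B A) ⬝ dR D C (B ⋎ A))
        (Term.bDisjFrom D (C ⋏ B) A ⬝ ((dR D C B ⊽ Term.id A) ⬝ Term.d (D ⋎ C) B A))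
/-- The functor `G` from DS to Br on arrow terms. -/
def Term.G {P : Type} : ∀ {A B : Form P}, Term P A B → GRel
  | _, _, .id A => gId A.size
  | _, _, .comp g f => gComp (Term.G g) (Term.G f)
  | _, _, @Term.conj _ A _ D _ f g => gPar A.size D.size (Term.G f) (Term.G g)
  | _, _, @Term.disj _ A _ D _ f g => gPar A.size D.size (Term.G f) (Term.G g)
  | _, _, .bConjTo A B C => gId (A.size + (B.size + C.size))
  | _, _, .bConjFrom A B C => gId (A.size + B.size + C.size)
  | _, _, .bDisjTo A B C => gId (A.size + (B.size + C.size))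
  | _, _, .bDisjFrom A B C => gId (A.size + B.size + C.size)
  | _, _, .cConj A B => gSwap A.size B.size
  | _, _, .cDisj A B => gSwap B.size A.size
  | _, _, .d A B C => gId (A.size + (B.size + C.size))
/-! ### Occurrences of letters and subformula occurrences -/

/-- The letter at the `(n+1)`-th letter-occurrence position of a formula
(`n` counted from `0`, from the left). -/
def Form.letterAt {P : Type} : Form P → ℕ → Option P
  | .letter p, 0 => some p
  | .letter _, _ + 1 => none
  | .conj A B, n => if n < A.size then A.letterAt n else B.letterAt (n - A.size)
  | .disj A B, n => if n < A.size then A.letterAt n else B.letterAt (n - A.size)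

/-- Directions for addressing subformula occurrences. -/
inductive Dir : Type
  | l
  | r
deriving DecidableEq

/-- The subformula occurrence of a formula at a given position (path). -/
def Form.subAt {P : Type} : Form P → List Dir → Option (Form P)
  | A, [] => some A
  | .conj A _, .l :: π => A.subAt π
  | .conj _ B, .r :: π => B.subAt π
  | .disj A _, .l :: π => A.subAt π
  | .disj _ B, .r :: π => B.subAt π
  | .letter _, _ :: _ => none

/-- The number of letter occurrences strictly to the left of the subformula
occurrence at a given position. -/
def Form.offsetAt {P : Type} : Form P → List Dir → ℕ
  | _, [] => 0
  | .conj A _, .l :: π => A.offsetAt π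
  | .conj A B, .r :: π => A.size + B.offsetAt π
  | .disj A _, .l :: π => A.offsetAt π
  | .disj A B, .r :: π => A.size + B.offsetAt π
  | .letter _, _ :: _ => 0

/-- The `(n+1)`-th occurrence of a letter in `A` is *linked* in `f : A ⊢ B` to the
`(m+1)`-th occurrence of the same letter in `B` when `{n_s, m_t}` is a member of
the partition corresponding to `Gf`. -/
def Linked {P : Type} {A B : Form P} (f : Term P A B) (n m : ℕ) : Prop :=
  Term.G f (Sum.inl n) (Sum.inr m)

/-!
`Gf` is the graph of a bijection `f.trace` between the letter occurrences of `A` and of `B`,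
defined by recursion on `f`. Every primitive arrow term, `d : A ∧ (B ∨ C) ⊢ (A ∧ B) ∨ C`
included, maps a pair of occurrences separated by a disjunction (the smallest subformula
containing both is a disjunction with one of them on each side) to a pair separated by a
disjunction, and hence so does every arrow term. (For `d` the dual statement about conjunctions
fails, which is why only this direction is propagated.) So `y₁` and `y₂` would be separated in `B`
both by a disjunction and by a conjunction, which is impossible.
-/

open Set Relation

def swapFun (a b i : ℕ) : ℕ := if i < a then i + b else i - a

theorem swapFun_of_lt {a b i : ℕ} (h : i < a) : swapFun a b i = i + b := if_pos h

theorem swapFun_add (a b k : ℕ) : swapFun a b (a + k) = k := by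
  simp [swapFun]

def parFun (a d : ℕ) (φ ψ : ℕ → ℕ) (i : ℕ) : ℕ := if i < a then φ i else ψ (i - a) + d

theorem parFun_of_lt {a d i : ℕ} {φ ψ : ℕ → ℕ} (h : i < a) : parFun a d φ ψ i = φ i := if_pos h

theorem parFun_add (a d k : ℕ) (φ ψ : ℕ → ℕ) : parFun a d φ ψ (a + k) = ψ k + d := by
  simp [parFun]

theorem bijOn_swapFun (a b : ℕ) : BijOn (swapFun a b) (Iio (a + b)) (Iio (b + a)) := by
  refine ⟨fun i hi => ?_, fun i hi j hj hij => ?_, fun j hj => ?_⟩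
  · simp only [mem_Iio, swapFun] at hi ⊢
    split_ifs <;> omega
  · simp only [mem_Iio, swapFun] at hi hj hij
    split_ifs at hij <;> omega
  · simp only [mem_Iio] at hj
    by_cases hjb : j < b
    · exact ⟨j + a, by simp only [mem_Iio]; omega, by simp [swapFun]⟩
    · exact ⟨j - b, by simp only [mem_Iio]; omega, by rw [swapFun_of_lt (by omega)]; omega⟩

theorem bijOn_parFun {a b d e : ℕ} {φ ψ : ℕ → ℕ} (hφ : BijOn φ (Iio a) (Iio d))
    (hψ : BijOn ψ (Iio b) (Iio e)) : BijOn (parFun a d φ ψ) (Iio (a + b)) (Iio (d + e)) := by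
  have left : ∀ {i}, i < a → φ i < d := fun hi => hφ.mapsTo hi
  have right : ∀ {i}, a ≤ i → i < a + b → ψ (i - a) < e := fun {i} h₁ h₂ =>
    hψ.mapsTo (show i - a < b by omega)
  refine ⟨fun i hi => ?_, fun i hi j hj hij => ?_, fun j hj => ?_⟩
  · simp only [mem_Iio, parFun] at hi ⊢
    split_ifs with h
    · have := left h; omega
    · have := right (not_lt.1 h) hi; omega
  · simp only [mem_Iio, parFun] at hi hj hij
    split_ifs at hij with h₁ h₂ h₂
    · exact hφ.injOn h₁ h₂ hij
    · have := left h₁; omega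
    · have := left h₂; omega
    · have := hψ.injOn (show i - a < b by omega) (show j - a < b by omega) (by omega)
      omega
  · simp only [mem_Iio] at hj
    by_cases hjd : j < d
    · obtain ⟨i, hi, rfl⟩ := hφ.surjOn hjd
      exact ⟨i, by simp only [mem_Iio] at hi ⊢; omega, parFun_of_lt hi⟩
    · obtain ⟨k, hk, hk'⟩ := hψ.surjOn (show j - d < e by omega)
      refine ⟨a + k, by simp only [mem_Iio] at hk ⊢; omega, ?_⟩
      rw [parFun_add, hk']
      omega

inductive Conn : Type
  | conj
  | disj

namespace Form

variable {P : Type} {c c' c₀ : Conn} {n₁ n₂ : ℕ}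

def bin : Conn → Form P → Form P → Form P
  | .conj => .conj
  | .disj => .disj

theorem size_bin (c : Conn) (A B : Form P) : (bin c A B).size = A.size + B.size := by
  cases c <;> rfl

/-- `A.Sep c n₁ n₂`: the smallest subformula occurrence of `A` containing the letter occurrences
`n₁` and `n₂` has main connective `c`, with `n₁` and `n₂` on different sides of it. -/
def Sep (c : Conn) : Form P → ℕ → ℕ → Prop
  | .letter _, _, _ => False
  | .conj A B, n₁, n₂ => A.Sep c n₁ n₂ ∨
      (∃ k₁ k₂, n₁ = A.size + k₁ ∧ n₂ = A.size + k₂ ∧ B.Sep c k₁ k₂) ∨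
      (c = .conj ∧ (n₁ < A.size ∧ A.size ≤ n₂ ∧ n₂ < A.size + B.size ∨
        n₂ < A.size ∧ A.size ≤ n₁ ∧ n₁ < A.size + B.size))
  | .disj A B, n₁, n₂ => A.Sep c n₁ n₂ ∨
      (∃ k₁ k₂, n₁ = A.size + k₁ ∧ n₂ = A.size + k₂ ∧ B.Sep c k₁ k₂) ∨
      (c = .disj ∧ (n₁ < A.size ∧ A.size ≤ n₂ ∧ n₂ < A.size + B.size ∨
        n₂ < A.size ∧ A.size ≤ n₁ ∧ n₁ < A.size + B.size))

theorem sep_bin_iff {A B : Form P} :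
    (bin c₀ A B).Sep c n₁ n₂ ↔ A.Sep c n₁ n₂ ∨
      (∃ k₁ k₂, n₁ = A.size + k₁ ∧ n₂ = A.size + k₂ ∧ B.Sep c k₁ k₂) ∨
      (c = c₀ ∧ (n₁ < A.size ∧ A.size ≤ n₂ ∧ n₂ < A.size + B.size ∨
        n₂ < A.size ∧ A.size ≤ n₁ ∧ n₁ < A.size + B.size)) := by
  cases c₀ <;> rfl

namespace Sep

theorem lt_size : ∀ {A : Form P} {n₁ n₂ : ℕ}, A.Sep c n₁ n₂ → n₁ < A.size ∧ n₂ < A.size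
  | .letter _, _, _, h => h.elim
  | .conj A B, _, _, h | .disj A B, _, _, h => by
    rcases h with h | ⟨k₁, k₂, rfl, rfl, h⟩ | ⟨-, h⟩
    · have := lt_size h; simp only [size]; omega
    · have := lt_size h; simp only [size]; omega
    · simp only [size]; omega

theorem symm : ∀ {A : Form P} {n₁ n₂ : ℕ}, A.Sep c n₁ n₂ → A.Sep c n₂ n₁
  | .letter _, _, _, h => h.elim
  | .conj A B, _, _, h | .disj A B, _, _, h => by
    rcases h with h | ⟨k₁, k₂, rfl, rfl, h⟩ | ⟨hc, h⟩
    · exact Or.inl h.symm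
    · exact Or.inr (Or.inl ⟨k₂, k₁, rfl, rfl, h.symm⟩)
    · exact Or.inr (Or.inr ⟨hc, h.symm⟩)

theorem conn_eq : ∀ {A : Form P} {n₁ n₂ : ℕ}, A.Sep c n₁ n₂ → A.Sep c' n₁ n₂ → c = c'
  | .letter _, _, _, h, _ => h.elim
  | .conj A B, _, _, h, h' | .disj A B, _, _, h, h' => by
    rcases h with h | ⟨k₁, k₂, rfl, rfl, h⟩ | ⟨rfl, h⟩ <;>
      rcases h' with h' | ⟨l₁, l₂, hl₁, hl₂, h'⟩ | ⟨rfl, h'⟩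
    · exact conn_eq h h'
    · have := lt_size h; omega
    · have := lt_size h; omega
    · have := lt_size h'; omega
    · obtain rfl : k₁ = l₁ := by omega
      obtain rfl : k₂ = l₂ := by omega
      exact conn_eq h h'
    · have := lt_size h; omega
    · have := lt_size h'; omega
    · have := lt_size h'; omega
    · rfl

end Sep

theorem sep_bin_assoc {A B C : Form P} :
    (bin c₀ A (bin c₀ B C)).Sep c n₁ n₂ ↔ (bin c₀ (bin c₀ A B) C).Sep c n₁ n₂ := by
  simp only [sep_bin_iff, size_bin]
  constructor
  · rintro (h | ⟨k₁, k₂, rfl, rfl, h | ⟨l₁, l₂, rfl, rfl, h⟩ | ⟨hc, h⟩⟩ | ⟨hc, h⟩)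
    · exact Or.inl (Or.inl h)
    · exact Or.inl (Or.inr (Or.inl ⟨k₁, k₂, rfl, rfl, h⟩))
    · exact Or.inr (Or.inl ⟨l₁, l₂, by omega, by omega, h⟩)
    · exact Or.inr (Or.inr ⟨hc, by omega⟩)
    · by_cases hAB : n₁ < A.size + B.size ∧ n₂ < A.size + B.size
      · exact Or.inl (Or.inr (Or.inr ⟨hc, by omega⟩))
      · exact Or.inr (Or.inr ⟨hc, by omega⟩)
  · rintro ((h | ⟨k₁, k₂, rfl, rfl, h⟩ | ⟨hc, h⟩) | ⟨l₁, l₂, rfl, rfl, h⟩ | ⟨hc, h⟩)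
    · exact Or.inl h
    · exact Or.inr (Or.inl ⟨k₁, k₂, rfl, rfl, Or.inl h⟩)
    · exact Or.inr (Or.inr ⟨hc, by omega⟩)
    · exact Or.inr (Or.inl ⟨B.size + l₁, B.size + l₂, by omega, by omega,
        Or.inr (Or.inl ⟨l₁, l₂, rfl, rfl, h⟩)⟩)
    · by_cases hA : n₁ < A.size ∨ n₂ < A.size
      · exact Or.inr (Or.inr ⟨hc, by omega⟩)
      · exact Or.inr (Or.inl ⟨n₁ - A.size, n₂ - A.size, by omega, by omega,
          Or.inr (Or.inr ⟨hc, by omega⟩)⟩)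

theorem Sep.bin_swap {A B : Form P} (h : (bin c₀ A B).Sep c n₁ n₂) :
    (bin c₀ B A).Sep c (swapFun A.size B.size n₁) (swapFun A.size B.size n₂) := by
  rw [sep_bin_iff] at h ⊢
  rcases h with h | ⟨k₁, k₂, rfl, rfl, h⟩ | ⟨hc, h⟩
  · obtain ⟨h₁, h₂⟩ := h.lt_size
    rw [swapFun_of_lt h₁, swapFun_of_lt h₂]
    exact Or.inr (Or.inl ⟨n₁, n₂, by omega, by omega, h⟩)
  · rw [swapFun_add, swapFun_add]
    exact Or.inl h
  · refine Or.inr (Or.inr ⟨hc, ?_⟩)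
    simp only [swapFun]
    split_ifs <;> omega

theorem Sep.distrib {A B C : Form P} (h : (A ⋏ (B ⋎ C)).Sep .disj n₁ n₂) :
    ((A ⋏ B) ⋎ C).Sep .disj n₁ n₂ := by
  rcases h with h | ⟨k₁, k₂, rfl, rfl, h | ⟨l₁, l₂, rfl, rfl, h⟩ | ⟨-, h⟩⟩ | ⟨hc, -⟩
  · exact Or.inl (Or.inl h)
  · exact Or.inl (Or.inr (Or.inl ⟨k₁, k₂, rfl, rfl, h⟩))
  · exact Or.inr (Or.inl ⟨l₁, l₂, by simp only [size]; omega, by simp only [size]; omega, h⟩)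
  · exact Or.inr (Or.inr ⟨rfl, by simp only [size]; omega⟩)
  · nomatch hc

theorem Sep.bin_par {A B D E : Form P} {φ ψ : ℕ → ℕ}
    (hφ : MapsTo φ (Iio A.size) (Iio D.size)) (hψ : MapsTo ψ (Iio B.size) (Iio E.size))
    (sφ : ∀ {n₁ n₂}, A.Sep c n₁ n₂ → D.Sep c (φ n₁) (φ n₂))
    (sψ : ∀ {n₁ n₂}, B.Sep c n₁ n₂ → E.Sep c (ψ n₁) (ψ n₂))
    (h : (bin c₀ A B).Sep c n₁ n₂) :
    (bin c₀ D E).Sep c (parFun A.size D.size φ ψ n₁) (parFun A.size D.size φ ψ n₂) := by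
  rw [sep_bin_iff] at h ⊢
  rcases h with h | ⟨k₁, k₂, rfl, rfl, h⟩ | ⟨hc, h⟩
  · obtain ⟨h₁, h₂⟩ := h.lt_size
    rw [parFun_of_lt h₁, parFun_of_lt h₂]
    exact Or.inl (sφ h)
  · rw [parFun_add, parFun_add]
    exact Or.inr (Or.inl ⟨_, _, add_comm _ _, add_comm _ _, sψ h⟩)
  · have left : ∀ {m}, m < A.size → parFun A.size D.size φ ψ m < D.size := fun hm => by
      rw [parFun_of_lt hm]
      exact hφ hm
    have right : ∀ {m}, A.size ≤ m → m < A.size + B.size →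
        D.size ≤ parFun A.size D.size φ ψ m ∧ parFun A.size D.size φ ψ m < D.size + E.size := by
      intro m h₁ h₂
      obtain ⟨k, rfl⟩ := Nat.exists_eq_add_of_le h₁
      have : ψ k < E.size := hψ (show k < B.size by omega)
      rw [parFun_add]
      omega
    refine Or.inr (Or.inr ⟨hc, ?_⟩)
    rcases h with ⟨h₁, h₂, h₃⟩ | ⟨h₁, h₂, h₃⟩
    · exact Or.inl ⟨left h₁, right h₂ h₃⟩
    · exact Or.inr ⟨left h₁, right h₂ h₃⟩

theorem offsetAt_append {C : Form P} {π : List Dir} (π' : List Dir) :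
    ∀ {A : Form P}, A.subAt π = some C → A.offsetAt (π ++ π') = A.offsetAt π + C.offsetAt π' := by
  induction π with
  | nil =>
    intro A h
    obtain rfl : A = C := by simpa only [subAt, Option.some.injEq] using h
    simp [offsetAt]
  | cons d π ih =>
    rintro (_ | ⟨A, B⟩ | ⟨A, B⟩) h
    · simp [subAt] at h
    all_goals cases d with
      | l => exact ih (A := A) h
      | r => simp only [List.cons_append, offsetAt, ih (A := B) h, Nat.add_assoc]

theorem sep_offsetAt_of_subAt {C D : Form P} {i j : ℕ} (hi : i < C.size) (hj : j < D.size)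
    {π : List Dir} : ∀ {A : Form P}, A.subAt π = some (bin c C D) →
      A.Sep c (A.offsetAt π + i) (A.offsetAt π + C.size + j) := by
  induction π with
  | nil =>
    intro A h
    obtain rfl : A = bin c C D := by simpa only [subAt, Option.some.injEq] using h
    rw [sep_bin_iff]
    exact Or.inr (Or.inr ⟨rfl, by simp only [offsetAt]; omega⟩)
  | cons d π ih =>
    rintro (_ | ⟨A, B⟩ | ⟨A, B⟩) h
    · simp [subAt] at h
    all_goals cases d with
      | l => exact Or.inl (ih (A := A) h)
      | r => exact Or.inr (Or.inl ⟨_, _, by simp only [offsetAt]; omega,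
          by simp only [offsetAt]; omega, ih (A := B) h⟩)

theorem sep_offsetAt_append {p q : P} {A : Form P} {π : List Dir}
    (h : A.subAt π = some (bin c (letter p) (letter q))) :
    A.Sep c (A.offsetAt (π ++ [.l])) (A.offsetAt (π ++ [.r])) := by
  rw [offsetAt_append _ h, offsetAt_append _ h]
  cases c <;> simpa [bin, offsetAt, size] using sep_offsetAt_of_subAt Nat.one_pos Nat.one_pos h


end Form

theorem gFun_symm {m : ℕ} {φ : ℕ → ℕ} {u v : ℕ ⊕ ℕ} (h : gFun m φ u v) : gFun m φ v u :=
  let ⟨i, hi, hu, hv⟩ := h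
  ⟨i, hi, hv, hu⟩

def gGlue (Pr R : GRel) (x y : ℕ ⊕ ℕ ⊕ ℕ) : Prop :=
  (∃ x' y', Sum.map id Sum.inl x' = x ∧ Sum.map id Sum.inl y' = y ∧ R x' y') ∨
  (∃ x' y', Sum.inr x' = x ∧ Sum.inr y' = y ∧ Pr x' y')

theorem gComp_eq_transGen (Pr R : GRel) (u v : ℕ ⊕ ℕ) :
    gComp Pr R u v = TransGen (gGlue Pr R) (Sum.map id Sum.inr u) (Sum.map id Sum.inr v) :=
  rfl

theorem gComp_gFun {a b : ℕ} {φ ψ : ℕ → ℕ} (hφ : BijOn φ (Iio a) (Iio b))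
    (hψ : InjOn ψ (Iio b)) : gComp (gFun b ψ) (gFun a φ) = gFun a (ψ ∘ φ) := by
  let block (i : ℕ) (x : ℕ ⊕ ℕ ⊕ ℕ) : Prop :=
    x = .inl i ∨ x = .inr (.inl (φ i)) ∨ x = .inr (.inr (ψ (φ i)))
  have block_inj : ∀ {i j x}, i < a → j < a → block i x → block j x → i = j := by
    intro i j x hi hj hxi hxj
    rcases hxi with rfl | rfl | rfl <;> rcases hxj with h | h | h <;>
      simp only [Sum.inl.injEq, Sum.inr.injEq, reduceCtorEq] at h
    · exact h
    · exact hφ.injOn hi hj h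
    · exact hφ.injOn hi hj (hψ (hφ.mapsTo hi) (hφ.mapsTo hj) h)
  have block_map : ∀ {i} (u : ℕ ⊕ ℕ), block i (Sum.map id Sum.inr u) ↔
      u = .inl i ∨ u = .inr ((ψ ∘ φ) i) := by
    intro i u
    cases u <;> simp [block]
  have glue_block : ∀ {x y}, gGlue (gFun b ψ) (gFun a φ) x y →
      ∃ i < a, block i x ∧ block i y := by
    rintro x y (⟨x', y', rfl, rfl, i, hi, hx, hy⟩ | ⟨x', y', rfl, rfl, j, hj, hx, hy⟩)
    · refine ⟨i, hi, ?_, ?_⟩ <;> [rcases hx with rfl | rfl; rcases hy with rfl | rfl] <;>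
        simp [block]
    · obtain ⟨i, hi, rfl⟩ := hφ.surjOn hj
      refine ⟨i, hi, ?_, ?_⟩ <;> [rcases hx with rfl | rfl; rcases hy with rfl | rfl] <;>
        simp [block]
  have glue_mid : ∀ {i x}, i < a → block i x →
      gGlue (gFun b ψ) (gFun a φ) x (.inr (.inl (φ i))) := by
    rintro i x hi (rfl | rfl | rfl)
    · exact Or.inl ⟨.inl i, .inr (φ i), rfl, rfl, i, hi, Or.inl rfl, Or.inr rfl⟩
    · exact Or.inl ⟨.inr (φ i), .inr (φ i), rfl, rfl, i, hi, Or.inr rfl, Or.inr rfl⟩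
    · exact Or.inr
        ⟨.inr (ψ (φ i)), .inl (φ i), rfl, rfl, φ i, hφ.mapsTo hi, Or.inr rfl, Or.inl rfl⟩
  funext u v
  rw [gComp_eq_transGen, eq_iff_iff]
  constructor
  · intro h
    have same_block : ∀ {x y}, TransGen (gGlue (gFun b ψ) (gFun a φ)) x y →
        ∃ i < a, block i x ∧ block i y := by
      intro x y h
      induction h with
      | single h => exact glue_block h
      | tail _ h ih =>
        obtain ⟨i, hi, hx, hy⟩ := ih
        obtain ⟨j, hj, hy', hz⟩ := glue_block h
        obtain rfl := block_inj hi hj hy hy'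
        exact ⟨i, hi, hx, hz⟩
    obtain ⟨i, hi, hu, hv⟩ := same_block h
    exact ⟨i, hi, (block_map u).1 hu, (block_map v).1 hv⟩
  · rintro ⟨i, hi, hu, hv⟩
    have glue_symm : ∀ {x y}, gGlue (gFun b ψ) (gFun a φ) x y →
        gGlue (gFun b ψ) (gFun a φ) y x := by
      rintro x y (⟨x', y', rfl, rfl, h⟩ | ⟨x', y', rfl, rfl, h⟩)
      exacts [Or.inl ⟨y', x', rfl, rfl, gFun_symm h⟩, Or.inr ⟨y', x', rfl, rfl, gFun_symm h⟩]
    exact .head (glue_mid hi ((block_map u).2 hu))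
      (.single (glue_symm (glue_mid hi ((block_map v).2 hv))))

theorem gPar_gFun {a b d : ℕ} {φ ψ : ℕ → ℕ} :
    gPar a d (gFun a φ) (gFun b ψ) = gFun (a + b) (parFun a d φ ψ) := by
  funext u v
  rw [eq_iff_iff]
  have shift : ∀ {k} (x : ℕ ⊕ ℕ), (x = .inl (a + k) ∨ x = .inr (ψ k + d)) ↔
      ∃ x', (x' = .inl k ∨ x' = .inr (ψ k)) ∧ x = Sum.map (· + a) (· + d) x' := by
    intro k x
    constructor
    · rintro (rfl | rfl)
      exacts [⟨.inl k, Or.inl rfl, by simp [add_comm]⟩, ⟨.inr (ψ k), Or.inr rfl, rfl⟩]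
    · rintro ⟨x', rfl | rfl, rfl⟩
      exacts [Or.inl (by simp [add_comm]), Or.inr rfl]
  constructor
  · rintro (⟨i, hi, hu, hv⟩ | ⟨u', v', ⟨k, hk, hu, hv⟩, rfl, rfl⟩)
    · exact ⟨i, by omega, by rwa [parFun_of_lt hi], by rwa [parFun_of_lt hi]⟩
    · refine ⟨a + k, by omega, ?_, ?_⟩ <;> rw [parFun_add, shift]
      exacts [⟨u', hu, rfl⟩, ⟨v', hv, rfl⟩]
  · rintro ⟨i, hi, hu, hv⟩
    rcases lt_or_ge i a with hia | hia
    · rw [parFun_of_lt hia] at hu hv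
      exact Or.inl ⟨i, hia, hu, hv⟩
    · obtain ⟨k, rfl⟩ := Nat.exists_eq_add_of_le hia
      rw [parFun_add, shift] at hu hv
      obtain ⟨u', hu', rfl⟩ := hu
      obtain ⟨v', hv', rfl⟩ := hv
      exact Or.inr ⟨u', v', ⟨k, by omega, hu', hv'⟩, rfl, rfl⟩

namespace Term

variable {P : Type}

def trace : ∀ {A B : Form P}, Term P A B → ℕ → ℕ
  | _, _, .id _ => fun i => i
  | _, _, .comp g f => g.trace ∘ f.trace
  | _, _, @Term.conj _ A _ D _ f g => parFun A.size D.size f.trace g.trace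
  | _, _, @Term.disj _ A _ D _ f g => parFun A.size D.size f.trace g.trace
  | _, _, .bConjTo .. | _, _, .bConjFrom .. | _, _, .bDisjTo .. | _, _, .bDisjFrom ..
  | _, _, .d .. => fun i => i
  | _, _, .cConj A B => swapFun A.size B.size
  | _, _, .cDisj A B => swapFun B.size A.size

theorem bijOn_trace {A B : Form P} (f : Term P A B) :
    BijOn f.trace (Iio A.size) (Iio B.size) := by
  induction f with
  | id => exact bijOn_id _
  | comp g f ihg ihf => exact ihg.comp ihf
  | conj f g ihf ihg | disj f g ihf ihg => exact bijOn_parFun ihf ihg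
  | bConjTo | bConjFrom | bDisjTo | bDisjFrom | d =>
    simp only [trace, Form.size, Nat.add_assoc]
    exact bijOn_id _
  | cConj A B | cDisj A B => exact bijOn_swapFun _ _

theorem G_eq_gFun {A B : Form P} (f : Term P A B) : f.G = gFun A.size f.trace := by
  induction f with
  | comp g f ihg ihf => rw [G, ihg, ihf, gComp_gFun (bijOn_trace f) (bijOn_trace g).injOn]; rfl
  | conj f g ihf ihg | disj f g ihf ihg => rw [G, ihf, ihg, gPar_gFun]; rfl
  | _ => rfl

theorem sep_trace {A B : Form P} (f : Term P A B) {n₁ n₂ : ℕ} (h : A.Sep .disj n₁ n₂) :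
    B.Sep .disj (f.trace n₁) (f.trace n₂) := by
  induction f generalizing n₁ n₂ with
  | id => exact h
  | comp g f ihg ihf => exact ihg (ihf h)
  | conj f g ihf ihg =>
    exact Form.Sep.bin_par (c₀ := .conj) (bijOn_trace f).mapsTo (bijOn_trace g).mapsTo ihf ihg h
  | disj f g ihf ihg =>
    exact Form.Sep.bin_par (c₀ := .disj) (bijOn_trace f).mapsTo (bijOn_trace g).mapsTo ihf ihg h
  | bConjTo => exact Form.sep_bin_assoc (c₀ := .conj) |>.1 h
  | bConjFrom => exact Form.sep_bin_assoc (c₀ := .conj) |>.2 h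
  | bDisjTo => exact Form.sep_bin_assoc (c₀ := .disj) |>.1 h
  | bDisjFrom => exact Form.sep_bin_assoc (c₀ := .disj) |>.2 h
  | cConj => exact Form.Sep.bin_swap (c₀ := .conj) h
  | cDisj => exact Form.Sep.bin_swap (c₀ := .disj) h
  | d => exact Form.Sep.distrib h

end Term

theorem Linked.trace_eq {P : Type} {A B : Form P} {f : Term P A B} {n m : ℕ}
    (h : Linked f n m) : f.trace n = m := by
  rw [Linked, Term.G_eq_gFun] at h
  obtain ⟨i, -, hn, hm⟩ := h
  simp only [Sum.inl.injEq, Sum.inr.injEq, reduceCtorEq, or_false, false_or] at hn hm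
  rw [hn, hm]

theorem lemma_3_general {P : Type} {A B : Form P} (f : Term P A B) (p₁ p₂ : P)
    (π₁ π₂ ρ₁ ρ₂ : List Dir)
    (hl₁ : Linked f (A.offsetAt π₁) (B.offsetAt ρ₁))
    (hl₂ : Linked f (A.offsetAt π₂) (B.offsetAt ρ₂))
    (hA : ∃ π : List Dir,
      (A.subAt π = some (Form.letter p₁ ⋎ Form.letter p₂) ∧
        π₁ = π ++ [Dir.l] ∧ π₂ = π ++ [Dir.r]) ∨
      (A.subAt π = some (Form.letter p₂ ⋎ Form.letter p₁) ∧
        π₂ = π ++ [Dir.l] ∧ π₁ = π ++ [Dir.r]))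
    (hB : ∃ ρ : List Dir,
      (B.subAt ρ = some (Form.letter p₁ ⋏ Form.letter p₂) ∧
        ρ₁ = ρ ++ [Dir.l] ∧ ρ₂ = ρ ++ [Dir.r]) ∨
      (B.subAt ρ = some (Form.letter p₂ ⋏ Form.letter p₁) ∧
        ρ₂ = ρ ++ [Dir.l] ∧ ρ₁ = ρ ++ [Dir.r])) :
    False := by
  have sepA : A.Sep .disj (A.offsetAt π₁) (A.offsetAt π₂) := by
    obtain ⟨π, ⟨hπ, rfl, rfl⟩ | ⟨hπ, rfl, rfl⟩⟩ := hA
    exacts [Form.sep_offsetAt_append (c := .disj) hπ,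
      (Form.sep_offsetAt_append (c := .disj) hπ).symm]
  have sepB : B.Sep .conj (B.offsetAt ρ₁) (B.offsetAt ρ₂) := by
    obtain ⟨ρ, ⟨hρ, rfl, rfl⟩ | ⟨hρ, rfl, rfl⟩⟩ := hB
    exacts [Form.sep_offsetAt_append (c := .conj) hρ,
      (Form.sep_offsetAt_append (c := .conj) hρ).symm]
  have sepB' := f.sep_trace sepA
  rw [hl₁.trace_eq, hl₂.trace_eq] at sepB'
  nomatch sepB'.conn_eq sepB

/-- **Lemma 3** (acyclicity): let `f : A ⊢ B` be an arrow term of DS, and for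
`i ∈ {1,2}` let `x_i` in `A` and `y_i` in `B` be occurrences of the letter `p_i`
that are linked in `f`. Then it is impossible that `A` has a subformula
occurrence `x₁ ∨ x₂` or `x₂ ∨ x₁` and `B` has a subformula occurrence `y₁ ∧ y₂`
or `y₂ ∧ y₁`. -/
theorem lemma_3 {P : Type} {A B : Form P} (f : Term P A B) (p₁ p₂ : P)
    (π₁ π₂ ρ₁ ρ₂ : List Dir)
    (hx₁ : A.subAt π₁ = some (Form.letter p₁)) (hx₂ : A.subAt π₂ = some (Form.letter p₂))
    (hy₁ : B.subAt ρ₁ = some (Form.letter p₁)) (hy₂ : B.subAt ρ₂ = some (Form.letter p₂))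
    (hl₁ : Linked f (A.offsetAt π₁) (B.offsetAt ρ₁))
    (hl₂ : Linked f (A.offsetAt π₂) (B.offsetAt ρ₂))
    (hA : ∃ π : List Dir,
      (A.subAt π = some (Form.letter p₁ ⋎ Form.letter p₂) ∧
        π₁ = π ++ [Dir.l] ∧ π₂ = π ++ [Dir.r]) ∨
      (A.subAt π = some (Form.letter p₂ ⋎ Form.letter p₁) ∧
        π₂ = π ++ [Dir.l] ∧ π₁ = π ++ [Dir.r]))
    (hB : ∃ ρ : List Dir,
      (B.subAt ρ = some (Form.letter p₁ ⋏ Form.letter p₂) ∧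
        ρ₁ = ρ ++ [Dir.l] ∧ ρ₂ = ρ ++ [Dir.r]) ∨
      (B.subAt ρ = some (Form.letter p₂ ⋏ Form.letter p₁) ∧
        ρ₂ = ρ ++ [Dir.l] ∧ ρ₁ = ρ ++ [Dir.r])) :
    False :=
  lemma_3_general f p₁ p₂ π₁ π₂ ρ₁ ρ₂ hl₁ hl₂ hA hB
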